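/- arXiv:2008.07107 — 2 statements merged into one kernel-verified Lean document; each statement's English description precedes it below -/
import Mathlib

section
/- Let X_j ~ N(θ_j, σ²) independently for j = 1,...,d, with θ_j ≥ a > 0 for all j in a set S of size at most s, and suppose a/σ ≥ Φ⁻¹(δ) − Φ⁻¹(α'/s). Define Ŝ = {j : X_j/σ ≥ max(Φ⁻¹(α'/s) + a/σ, Φ⁻¹(δ))}. Then P(S ⊄ Ŝ) ≤ α'. -/
/-!
A missed support coordinate `j` has `X_j < σ Φ⁻¹(α'/s) + a`, since the SNR condition makes the
first term of the max the threshold. Standardizing and using `θ_j ≥ a`, each such event has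
probability at most `Φ(Φ⁻¹(α'/s)) = α'/s`, and a union bound over the at most `s` support
coordinates gives `α'`.
-/

open MeasureTheory ProbabilityTheory Real Set

/-- The standard normal CDF. -/
noncomputable def Phi (y : ℝ) : ℝ := ((gaussianReal 0 1) (Set.Iic y)).toReal

/-- The standard normal quantile function (inverse CDF). -/
noncomputable def PhiInv : ℝ → ℝ := Function.invFun Phi

theorem ProbabilityTheory.continuous_cdf (ν : Measure ℝ) [IsProbabilityMeasure ν]
    [NullSingletonClass ν] : Continuous (cdf ν) := by
  refine continuous_iff_continuousAt.2 fun x ↦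
    continuousAt_iff_continuous_left_right.2 ⟨?_, (cdf ν).right_continuous x⟩
  rw [← continuousWithinAt_Iio_iff_Iic, (cdf ν).mono.continuousWithinAt_Iio_iff_leftLim_eq]
  have h := (cdf ν).measure_singleton x
  rw [measure_cdf, measure_singleton, eq_comm, ENNReal.ofReal_eq_zero, sub_nonpos] at h
  exact le_antisymm ((cdf ν).mono.leftLim_le le_rfl) h

lemma Phi_eq_cdf : Phi = cdf (gaussianReal 0 1) := by
  ext y
  rw [cdf_eq_real]
  rfl

lemma Phi_PhiInv {p : ℝ} (h0 : 0 < p) (h1 : p < 1) : Phi (PhiInv p) = p := by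
  refine Function.invFun_eq ?_
  have := nullSingletonClass_gaussianReal (μ := 0) one_ne_zero
  rw [Phi_eq_cdf]
  obtain ⟨x₁, hx₁⟩ := ((tendsto_cdf_atBot _).eventually_lt_const h0).exists
  obtain ⟨x₂, hx₂⟩ := ((tendsto_cdf_atTop _).eventually_const_lt h1).exists
  exact intermediate_value_univ x₁ x₂ (continuous_cdf _) ⟨hx₁.le, hx₂.le⟩

lemma monotone_Phi : Monotone Phi := Phi_eq_cdf ▸ (cdf _).mono

lemma MeasureTheory.measureReal_biUnion_finset_le_card_mul {Ω ι : Type*} [MeasurableSpace Ω]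
    {μ : Measure Ω} [IsFiniteMeasure μ] (S : Finset ι) (E : ι → Set Ω) {ε : ℝ}
    (hE : ∀ i ∈ S, μ.real (E i) ≤ ε) :
    μ.real (⋃ i ∈ S, E i) ≤ S.card * ε := calc
  μ.real (⋃ i ∈ S, E i) ≤ ∑ i ∈ S, μ.real (E i) := measureReal_biUnion_finset_le _ _
  _ ≤ S.card * ε := by simpa using Finset.sum_le_card_nsmul _ _ _ hE

namespace ProbabilityTheory.HasLaw

variable {Ω : Type*} [MeasurableSpace Ω] {P : Measure Ω} {X : Ω → ℝ} {m σ : ℝ}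

lemma standardize (hσ : σ ≠ 0) (hX : HasLaw X (gaussianReal m (σ ^ 2).toNNReal) P) :
    HasLaw (fun ω ↦ (X ω - m) / σ) (gaussianReal 0 1) P := by
  convert gaussianReal_div_const (gaussianReal_sub_const hX m) σ using 2
  · simp
  · ext; simp [hσ, sq_nonneg]

lemma measureReal_lt_le_Phi [IsFiniteMeasure P] (hσ : 0 < σ)
    (hX : HasLaw X (gaussianReal m (σ ^ 2).toNNReal) P) (c : ℝ) :
    P.real {ω | X ω < c} ≤ Phi ((c - m) / σ) := calc
  P.real {ω | X ω < c} ≤ P.real {ω | (X ω - m) / σ ≤ (c - m) / σ} :=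
    measureReal_mono fun ω (h : X ω < c) ↦ by
      change (X ω - m) / σ ≤ (c - m) / σ
      gcongr
  _ = Phi ((c - m) / σ) := (hX.standardize hσ.ne').measureReal_eq measurableSet_Iic

end ProbabilityTheory.HasLaw

theorem support_coverage_general {Ω : Type*} [MeasurableSpace Ω] (μ : Measure Ω)
    [IsProbabilityMeasure μ] (d s : ℕ) (hs : 1 ≤ s)
    (σ a δ α' : ℝ) (hσ : 0 < σ)
    (hα'0 : 0 < α') (hα'1 : α' < 1)
    (θ : Fin d → ℝ) (X : Fin d → Ω → ℝ)
    (hmeas : ∀ j, Measurable (X j))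
    (hlaw : ∀ j, μ.map (X j) = gaussianReal (θ j) (σ ^ 2).toNNReal)
    (hsupp : (Finset.univ.filter (fun j => θ j ≠ 0)).card ≤ s)
    (hsig : ∀ j, θ j ≠ 0 → a ≤ θ j)
    (hsnr : PhiInv δ - PhiInv (α' / s) ≤ a / σ) :
    (μ {ω | ∃ j, θ j ≠ 0 ∧
      X j ω / σ < max (PhiInv (α' / s) + a / σ) (PhiInv δ)}).toReal ≤ α' := by
  set S := Finset.univ.filter (fun j => θ j ≠ 0)
  set q := PhiInv (α' / s)
  have hs0 : (0 : ℝ) < s := by exact_mod_cast hs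
  have hPhi_q : Phi q = α' / s := Phi_PhiInv (div_pos hα'0 hs0)
    ((div_le_self hα'0.le (by exact_mod_cast hs)).trans_lt hα'1)
  have hmiss : {ω | ∃ j, θ j ≠ 0 ∧ X j ω / σ < max (q + a / σ) (PhiInv δ)}
      ⊆ ⋃ j ∈ S, {ω | X j ω < σ * q + a} := by
    rintro ω ⟨j, hj, hlt⟩
    rw [max_eq_left (by linarith), div_lt_iff₀ hσ, add_mul, div_mul_cancel₀ a hσ.ne'] at hlt
    simp only [S, Finset.mem_filter, Finset.mem_univ, true_and, mem_iUnion]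
    exact ⟨j, hj, show X j ω < σ * q + a by linarith⟩
  have hmiss_j : ∀ j ∈ S, μ.real {ω | X j ω < σ * q + a} ≤ α' / s := fun j hj ↦ by
    refine (HasLaw.measureReal_lt_le_Phi hσ ⟨(hmeas j).aemeasurable, hlaw j⟩ _).trans ?_
    have := hsig j (Finset.mem_filter.1 hj).2
    exact hPhi_q ▸ monotone_Phi ((div_le_iff₀ hσ).2 (by linarith))
  calc μ.real {ω | ∃ j, θ j ≠ 0 ∧ X j ω / σ < max (q + a / σ) (PhiInv δ)}
      ≤ μ.real (⋃ j ∈ S, {ω | X j ω < σ * q + a}) :=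
        measureReal_mono hmiss (measure_ne_top _ _)
    _ ≤ S.card * (α' / s) := measureReal_biUnion_finset_le_card_mul _ _ hmiss_j
    _ ≤ s * (α' / s) := by gcongr
    _ = α' := mul_div_cancel₀ _ hs0.ne'

/-- Support coverage: with `X_j ~ N(θ_j, σ²)` independent, support of size at most `s`,
signals at least `a`, and SNR condition `a/σ ≥ Φ⁻¹(δ) − Φ⁻¹(α'/s)`, the thresholding set
`Ŝ = {j : X_j/σ ≥ max(Φ⁻¹(α'/s) + a/σ, Φ⁻¹(δ))}` misses the support with probability
at most `α'`. -/
theorem support_coverage {Ω : Type*} [MeasurableSpace Ω] (μ : Measure Ω)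
    [IsProbabilityMeasure μ] (d s : ℕ) (hs : 1 ≤ s)
    (σ a δ α' : ℝ) (hσ : 0 < σ) (ha : 0 < a)
    (hδ0 : 0 < δ) (hδ1 : δ < 1) (hα'0 : 0 < α') (hα'1 : α' < 1)
    (θ : Fin d → ℝ) (X : Fin d → Ω → ℝ)
    (hmeas : ∀ j, Measurable (X j))
    (hlaw : ∀ j, μ.map (X j) = gaussianReal (θ j) (σ ^ 2).toNNReal)
    (hind : iIndepFun X μ)
    (hsupp : (Finset.univ.filter (fun j => θ j ≠ 0)).card ≤ s)
    (hsig : ∀ j, θ j ≠ 0 → a ≤ θ j)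
    (hsnr : PhiInv δ - PhiInv (α' / s) ≤ a / σ) :
    (μ {ω | ∃ j, θ j ≠ 0 ∧
      X j ω / σ < max (PhiInv (α' / s) + a / σ) (PhiInv δ)}).toReal ≤ α' :=
  support_coverage_general μ d s hs σ a δ α' hσ hα'0 hα'1 θ X hmeas hlaw hsupp hsig hsnr
end

section
/- Let Z ~ N(0,1) and ρ, σ > 0. Then E[(X − 2ρ) 1{X > 2ρ}] ≤ (σ/√(2π)) exp(−ρ²/(2σ²)) · (√(1 + 4σ²/ρ²) − 1)/(√(1 + 4σ²/ρ²) + 1), where X = ρ + σZ ~ N(ρ, σ²). -/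
/-!
With `u = a - μ`, the identity `(x - μ) φ = -v φ'` gives
`E[(X - a) 1{X > a}] = v φ(a) - u P(X > a)` for `X ~ N(μ, v)` with density `φ`.
The tail is bounded below by Birnbaum's minorant `D(x) = 2v φ(x) / (x - μ + √((x - μ)² + 4v))`:
`D` vanishes at infinity and `0 ≤ -D' ≤ φ` on `[μ, ∞)`, so `D(a) ≤ P(X > a)`.
Substituting yields `v φ(a) (s - u) / (s + u)` with `s = √(u² + 4v)`,
which at `μ = ρ`, `v = σ²`, `a = 2ρ` is the claimed bound.
-/

open MeasureTheory ProbabilityTheory Real Set Filter Topology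
open scoped NNReal

lemma add_sqrt_sq_add_pos (u : ℝ) {c : ℝ} (hc : 0 < c) : 0 < u + √(u ^ 2 + 4 * c) := by
  have : |u| < √(u ^ 2 + 4 * c) := by
    rw [← Real.sqrt_sq_eq_abs]
    exact Real.sqrt_lt_sqrt (sq_nonneg u) (by linarith)
  linarith [neg_abs_le u]

lemma mul_sqrt_sq_add_le {u c : ℝ} (hc : 0 ≤ c) : u * √(u ^ 2 + 4 * c) ≤ u ^ 2 + 2 * c := by
  have hs := Real.sq_sqrt (by positivity : 0 ≤ u ^ 2 + 4 * c)
  nlinarith [Real.sqrt_nonneg (u ^ 2 + 4 * c), sq_nonneg (u * √(u ^ 2 + 4 * c) - u ^ 2 - 2 * c)]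

namespace ProbabilityTheory

variable {μ : ℝ} {v : ℝ≥0}

lemma hasDerivAt_gaussianPDFReal (μ : ℝ) (v : ℝ≥0) (x : ℝ) :
    HasDerivAt (gaussianPDFReal μ v) (-((x - μ) / v) * gaussianPDFReal μ v x) x := by
  have h : HasDerivAt (fun y ↦ -(y - μ) ^ 2 / (2 * v)) (-((x - μ) / v)) x :=
    ((((hasDerivAt_id' x).sub_const μ).pow 2).neg.div_const (2 * (v : ℝ))).congr_deriv <| by
      rw [neg_div, Nat.cast_ofNat, pow_one, mul_one, mul_div_mul_left _ _ two_ne_zero]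
  rw [gaussianPDFReal_def]
  exact (h.exp.const_mul _).congr_deriv (by ring)

lemma tendsto_gaussianPDFReal_atTop (hv : v ≠ 0) :
    Tendsto (gaussianPDFReal μ v) atTop (𝓝 0) := by
  have h : Tendsto (fun x ↦ -(x - μ) ^ 2 / (2 * v)) atTop atBot := by
    simp_rw [neg_div]
    exact tendsto_neg_atTop_atBot.comp <|
      ((tendsto_pow_atTop two_ne_zero).comp (tendsto_atTop_add_const_right _ (-μ) tendsto_id)
        ).atTop_div_const (by positivity)
  rw [gaussianPDFReal_def, ← mul_zero (√(2 * π * v))⁻¹]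
  exact (tendsto_exp_atBot.comp h).const_mul _

lemma integrable_sub_mul_gaussianPDFReal (μ : ℝ) (v : ℝ≥0) :
    Integrable fun x ↦ (x - μ) * gaussianPDFReal μ v x := by
  rcases eq_or_ne v 0 with rfl | hv
  · simp
  have := ((integrable_mul_exp_neg_mul_sq (b := (2 * v : ℝ)⁻¹) (by positivity)).comp_sub_right μ
    ).const_mul (√(2 * π * v))⁻¹
  refine this.congr (ae_of_all _ fun x ↦ ?_)
  simp only [gaussianPDFReal]
  ring_nf

lemma integral_Ioi_sub_mul_gaussianPDFReal (hv : v ≠ 0) (a : ℝ) :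
    ∫ x in Ioi a, (x - μ) * gaussianPDFReal μ v x = v * gaussianPDFReal μ v a := by
  have hderiv (x : ℝ) (_ : x ∈ Ici a) :
      HasDerivAt (fun y ↦ -v * gaussianPDFReal μ v y) ((x - μ) * gaussianPDFReal μ v x) x :=
    ((hasDerivAt_gaussianPDFReal μ v x).const_mul (-v : ℝ)).congr_deriv <| by
      field_simp [NNReal.coe_ne_zero.2 hv]
  rw [integral_Ioi_of_hasDerivAt_of_tendsto' hderiv
    (integrable_sub_mul_gaussianPDFReal μ v).integrableOn
    (by simpa using (tendsto_gaussianPDFReal_atTop hv).const_mul (-v : ℝ))]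
  ring

lemma setIntegral_gaussianReal_eq_setIntegral_mul (hv : v ≠ 0) (f : ℝ → ℝ) {s : Set ℝ}
    (hs : MeasurableSet s) :
    ∫ x in s, f x ∂gaussianReal μ v = ∫ x in s, gaussianPDFReal μ v x * f x := by
  rw [← integral_indicator hs, integral_gaussianReal_eq_integral_smul hv, ← integral_indicator hs]
  congr with x
  by_cases hx : x ∈ s <;> simp [hx]

noncomputable def gaussianTailMinorant (μ : ℝ) (v : ℝ≥0) (x : ℝ) : ℝ :=
  2 * v * gaussianPDFReal μ v x / (x - μ + √((x - μ) ^ 2 + 4 * v))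

noncomputable def gaussianTailMinorantDerivRatio (v : ℝ≥0) (u : ℝ) : ℝ :=
  2 * (u * √(u ^ 2 + 4 * v) + v) / (√(u ^ 2 + 4 * v) * (u + √(u ^ 2 + 4 * v)))

lemma gaussianTailMinorantDerivRatio_nonneg (hv : v ≠ 0) {u : ℝ} (hu : 0 ≤ u) :
    0 ≤ gaussianTailMinorantDerivRatio v u := by
  have := add_sqrt_sq_add_pos u (c := v) (by positivity)
  unfold gaussianTailMinorantDerivRatio
  positivity

lemma gaussianTailMinorantDerivRatio_le_one (hv : v ≠ 0) (u : ℝ) :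
    gaussianTailMinorantDerivRatio v u ≤ 1 := by
  have hs : 0 < √(u ^ 2 + 4 * v) := Real.sqrt_pos.2 (by positivity)
  have hw := add_sqrt_sq_add_pos u (c := v) (by positivity)
  have hsq := Real.sq_sqrt (by positivity : 0 ≤ u ^ 2 + 4 * v)
  rw [gaussianTailMinorantDerivRatio, div_le_one (mul_pos hs hw)]
  nlinarith [mul_sqrt_sq_add_le (u := u) v.2]

lemma hasDerivAt_gaussianTailMinorant (hv : v ≠ 0) (x : ℝ) :
    HasDerivAt (gaussianTailMinorant μ v)
      (-(gaussianTailMinorantDerivRatio v (x - μ) * gaussianPDFReal μ v x)) x := by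
  have hs : 0 < √((x - μ) ^ 2 + 4 * v) := Real.sqrt_pos.2 (by positivity)
  have hw := add_sqrt_sq_add_pos (x - μ) (c := v) (by positivity)
  have hs' : HasDerivAt (fun y ↦ √((y - μ) ^ 2 + 4 * v)) ((x - μ) / √((x - μ) ^ 2 + 4 * v)) x :=
    (((((hasDerivAt_id' x).sub_const μ).fun_pow 2).add_const _).sqrt
      (by positivity)).congr_deriv <| by
      simp only [Nat.cast_ofNat, mul_one]
      rw [mul_div_mul_left _ _ two_ne_zero]
      simp
  have hw' := ((hasDerivAt_id' x).sub_const μ).fun_add hs'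
  refine (((hasDerivAt_gaussianPDFReal μ v x).const_mul (2 * v : ℝ)).div hw' hw.ne').congr_deriv ?_
  rw [gaussianTailMinorantDerivRatio]
  generalize √((x - μ) ^ 2 + 4 * v) = s at *
  field_simp
  ring

lemma tendsto_gaussianTailMinorant_atTop (hv : v ≠ 0) :
    Tendsto (gaussianTailMinorant μ v) atTop (𝓝 0) := by
  have hw : Tendsto (fun x ↦ x - μ + √((x - μ) ^ 2 + 4 * v)) atTop atTop :=
    tendsto_atTop_mono (fun x ↦ le_add_of_nonneg_right (Real.sqrt_nonneg _))
      (tendsto_atTop_add_const_right _ (-μ) tendsto_id)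
  exact ((tendsto_gaussianPDFReal_atTop hv).const_mul (2 * v : ℝ)).div_atTop hw

lemma gaussianTailMinorant_le_integral_Ioi (hv : v ≠ 0) {a : ℝ} (ha : μ ≤ a) :
    gaussianTailMinorant μ v a ≤ ∫ x in Ioi a, gaussianPDFReal μ v x := by
  have hderiv (x : ℝ) (_ : x ∈ Ici a) := hasDerivAt_gaussianTailMinorant (μ := μ) hv x
  have hderiv_nonpos (x : ℝ) (hx : x ∈ Ioi a) :
      -(gaussianTailMinorantDerivRatio v (x - μ) * gaussianPDFReal μ v x) ≤ 0 :=
    neg_nonpos.2 <| mul_nonneg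
      (gaussianTailMinorantDerivRatio_nonneg hv (by linarith [mem_Ioi.1 hx]))
      (gaussianPDFReal_nonneg μ v x)
  have hderiv_ge (x : ℝ) (_ : x ∈ Ioi a) :
      -gaussianPDFReal μ v x ≤
        -(gaussianTailMinorantDerivRatio v (x - μ) * gaussianPDFReal μ v x) :=
    neg_le_neg <| mul_le_of_le_one_left (gaussianPDFReal_nonneg μ v x)
      (gaussianTailMinorantDerivRatio_le_one hv _)
  have hlim := tendsto_gaussianTailMinorant_atTop (μ := μ) hv
  have hmono := setIntegral_mono_on (integrable_gaussianPDFReal μ v).neg.integrableOn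
    (integrableOn_Ioi_deriv_of_nonpos' hderiv hderiv_nonpos hlim) measurableSet_Ioi hderiv_ge
  rw [integral_Ioi_of_hasDerivAt_of_nonpos' hderiv hderiv_nonpos hlim, Pi.neg_def,
    integral_neg] at hmono
  linarith

lemma setIntegral_Ioi_sub_gaussianReal_le (hv : v ≠ 0) {a : ℝ} (ha : μ ≤ a) :
    ∫ x in Ioi a, (x - a) ∂gaussianReal μ v ≤ v * gaussianPDFReal μ v a *
      ((√((a - μ) ^ 2 + 4 * v) - (a - μ)) / (√((a - μ) ^ 2 + 4 * v) + (a - μ))) := by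
  have hsplit : ∫ x in Ioi a, gaussianPDFReal μ v x * (x - a) =
      (∫ x in Ioi a, (x - μ) * gaussianPDFReal μ v x) -
        (a - μ) * ∫ x in Ioi a, gaussianPDFReal μ v x := by
    have h := (integrable_gaussianPDFReal μ v).integrableOn (s := Ioi a).const_mul (a - μ)
    rw [← integral_const_mul,
      ← integral_sub (integrable_sub_mul_gaussianPDFReal μ v).integrableOn h]
    congr with x
    ring
  rw [setIntegral_gaussianReal_eq_setIntegral_mul hv _ measurableSet_Ioi, hsplit,
    integral_Ioi_sub_mul_gaussianPDFReal hv]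
  have hw := add_sqrt_sq_add_pos (a - μ) (c := v) (by positivity)
  calc _ ≤ v * gaussianPDFReal μ v a - (a - μ) * gaussianTailMinorant μ v a :=
        sub_le_sub_left (mul_le_mul_of_nonneg_left
          (gaussianTailMinorant_le_integral_Ioi hv ha) (sub_nonneg.2 ha)) _
    _ = _ := by
      rw [gaussianTailMinorant, add_comm (√_)]
      generalize √((a - μ) ^ 2 + 4 * v) = s at *
      field_simp
      ring

end ProbabilityTheory

/-- For `X ~ N(ρ, σ²)` with `ρ, σ > 0`,
`E[(X − 2ρ) 1{X > 2ρ}] ≤ (σ/√(2π)) exp(−ρ²/(2σ²)) · (√(1+4σ²/ρ²) − 1)/(√(1+4σ²/ρ²) + 1)`. -/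
theorem gaussian_excess_bound (ρ σ : ℝ) (hρ : 0 < ρ) (hσ : 0 < σ) :
    ∫ x in Set.Ioi (2 * ρ), (x - 2 * ρ) ∂(gaussianReal ρ (σ ^ 2).toNNReal)
      ≤ σ / Real.sqrt (2 * Real.pi) * Real.exp (-ρ ^ 2 / (2 * σ ^ 2)) *
        ((Real.sqrt (1 + 4 * σ ^ 2 / ρ ^ 2) - 1) /
          (Real.sqrt (1 + 4 * σ ^ 2 / ρ ^ 2) + 1)) := by
  have hv : (σ ^ 2).toNNReal ≠ 0 := by positivity
  have hvσ : ((σ ^ 2).toNNReal : ℝ) = σ ^ 2 := Real.coe_toNNReal _ (by positivity)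
  refine (setIntegral_Ioi_sub_gaussianReal_le hv (by linarith : ρ ≤ 2 * ρ)).trans_eq ?_
  have hsqrt : √((2 * ρ - ρ) ^ 2 + 4 * σ ^ 2) = ρ * √(1 + 4 * σ ^ 2 / ρ ^ 2) := by
    rw [show (2 * ρ - ρ) ^ 2 + 4 * σ ^ 2 = ρ ^ 2 * (1 + 4 * σ ^ 2 / ρ ^ 2) by field_simp; ring,
      Real.sqrt_mul (sq_nonneg ρ), Real.sqrt_sq hρ.le]
  have hpdf : gaussianPDFReal ρ (σ ^ 2).toNNReal (2 * ρ) =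
      (√(2 * π) * σ)⁻¹ * exp (-ρ ^ 2 / (2 * σ ^ 2)) := by
    rw [gaussianPDFReal, hvσ, Real.sqrt_mul (by positivity), Real.sqrt_sq hσ.le]
    ring_nf
  rw [hvσ, hsqrt, hpdf]
  have : 0 < 1 + √(1 + 4 * σ ^ 2 / ρ ^ 2) := by positivity
  field_simp
  ring
end
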